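/- arXiv:2509.21529 — 4 statements merged into one kernel-verified Lean document; each statement's English description precedes it below -/
import Mathlib

section
/- For every finite simple graph G, the maximum nullity of G is at most the zero forcing number of G, i.e., M(G) ≤ Z(G). -/
/-- One round of the zero forcing color change rule, where vertices in the
leak set `L` are not permitted to force. A blue vertex `u ∉ L` with exactly one
non-blue neighbor `v` turns `v` blue. -/
def zfStep {V : Type*} (G : SimpleGraph V) (L : Set V) (B : Set V) : Set V :=
  B ∪ {v | ∃ u ∈ B, u ∉ L ∧ G.Adj u v ∧ ∀ w, G.Adj u w → w ∉ B → w = v}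

/-- The set of vertices eventually colored blue starting from `B`, with leaks `L`. -/
def zfClosure {V : Type*} (G : SimpleGraph V) (L : Set V) (B : Set V) : Set V :=
  ⋃ k, (zfStep G L)^[k] B

/-- `B` is an `ℓ`-leaky forcing set: for every leak set of size at most `ℓ`,
starting with exactly `B` blue, eventually every vertex becomes blue. -/
def IsLeakyForcingSet {V : Type*} (G : SimpleGraph V) (ℓ : ℕ) (B : Set V) : Prop :=
  ∀ L : Set V, L.ncard ≤ ℓ → zfClosure G L B = Set.univ

/-- `B` is a zero forcing set (no leaks). -/
def IsZeroForcingSet {V : Type*} (G : SimpleGraph V) (B : Set V) : Prop :=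
  zfClosure G (∅ : Set V) B = Set.univ

/-- The zero forcing number `Z(G)`: minimum cardinality of a zero forcing set. -/
noncomputable def zfNumber {V : Type*} (G : SimpleGraph V) : ℕ :=
  sInf (Set.ncard '' {B : Set V | IsZeroForcingSet G B})

/-- The `ℓ`-leaky forcing number `Z_(ℓ)(G)`: minimum cardinality of an
`ℓ`-leaky forcing set. -/
noncomputable def leakyNumber {V : Type*} (G : SimpleGraph V) (ℓ : ℕ) : ℕ :=
  sInf (Set.ncard '' {B : Set V | IsLeakyForcingSet G ℓ B})

/-- `A` is a real symmetric matrix whose off-diagonal nonzero pattern is the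
adjacency of `G` (diagonal entries are unconstrained). -/
def CompatMatrix {V : Type*} [Fintype V] (G : SimpleGraph V) (A : Matrix V V ℝ) : Prop :=
  A.IsSymm ∧ ∀ i j : V, i ≠ j → (A i j ≠ 0 ↔ G.Adj i j)

/-- The minimum rank `mr(G)` of a graph. -/
noncomputable def minRank {V : Type*} [Fintype V] (G : SimpleGraph V) : ℕ :=
  sInf {r | ∃ A : Matrix V V ℝ, CompatMatrix G A ∧ A.rank = r}

/-- The maximum nullity `M(G)` of a graph, where the nullity of an `n × n`
matrix `A` is `n - rank A`. -/
noncomputable def maxNullity {V : Type*} [Fintype V] (G : SimpleGraph V) : ℕ :=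
  sSup {k | ∃ A : Matrix V V ℝ, CompatMatrix G A ∧ Fintype.card V - A.rank = k}

/-
If `A x = 0` and `x` vanishes on the blue vertices, then whenever a blue `u` has a
single non-blue neighbour `v`, row `u` of `A x = 0` reduces to `A u v * x v = 0` with
`A u v ≠ 0`, so `x v = 0`. Hence a kernel vector vanishing on a zero forcing set `B` is zero;
so restriction to `B` embeds `ker A` into `K^B` and `null A ≤ |B|`.
-/

section ZeroForcing

variable {V K : Type*} [Fintype V] [Field K] {G : SimpleGraph V} {A : Matrix V V K}

theorem eqOn_zero_zfStep (hA : ∀ i j, i ≠ j → (A i j ≠ 0 ↔ G.Adj i j)) {x : V → K}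
    (hx : A.mulVec x = 0) (L : Set V) {S : Set V} (hS : Set.EqOn x 0 S) :
    Set.EqOn x 0 (zfStep G L S) := by
  rintro v (hv | ⟨u, huS, -, huv, huniq⟩)
  · exact hS hv
  by_cases hvS : v ∈ S
  · exact hS hvS
  have hrow : ∑ w, A u w * x w = A u v * x v := by
    refine Finset.sum_eq_single v (fun w _ hwv => ?_) (by simp)
    by_cases hwS : w ∈ S
    · simp [hS hwS]
    have hwu : u ≠ w := fun h => hwS (h ▸ huS)
    have hnadj : ¬ G.Adj u w := fun h => hwv (huniq w h hwS)
    rw [not_not.mp (mt (hA u w hwu).mp hnadj), zero_mul]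
  have hAuv : A u v ≠ 0 := (hA u v huv.ne).mpr huv
  have hu : ∑ w, A u w * x w = 0 := congrFun hx u
  exact (mul_eq_zero.mp (hrow ▸ hu)).resolve_left hAuv

theorem eqOn_zero_zfClosure (hA : ∀ i j, i ≠ j → (A i j ≠ 0 ↔ G.Adj i j)) {x : V → K}
    (hx : A.mulVec x = 0) (L : Set V) {B : Set V} (hB : Set.EqOn x 0 B) :
    Set.EqOn x 0 (zfClosure G L B) := by
  have hiter : ∀ k, Set.EqOn x 0 ((zfStep G L)^[k] B) := by
    intro k
    induction k with
    | zero => exact hB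
    | succ k ih =>
      rw [Function.iterate_succ_apply']
      exact eqOn_zero_zfStep hA hx L ih
  intro v hv
  obtain ⟨k, hk⟩ := Set.mem_iUnion.mp hv
  exact hiter k hk

theorem eq_zero_of_isZeroForcingSet (hA : ∀ i j, i ≠ j → (A i j ≠ 0 ↔ G.Adj i j))
    {B : Set V} (hB : IsZeroForcingSet G B) {x : V → K} (hx : A.mulVec x = 0)
    (hxB : Set.EqOn x 0 B) : x = 0 := by
  funext v
  exact eqOn_zero_zfClosure hA hx ∅ hxB (hB.symm ▸ Set.mem_univ v)

theorem finrank_ker_mulVecLin_le_ncard (hA : ∀ i j, i ≠ j → (A i j ≠ 0 ↔ G.Adj i j))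
    {B : Set V} (hB : IsZeroForcingSet G B) :
    Module.finrank K (LinearMap.ker A.mulVecLin) ≤ B.ncard := by
  have : Fintype B := B.toFinite.fintype
  have hinj : Function.Injective
      (LinearMap.funLeft K K ((↑) : B → V) ∘ₗ (LinearMap.ker A.mulVecLin).subtype) := by
    rw [← LinearMap.ker_eq_bot, LinearMap.ker_eq_bot']
    rintro ⟨x, hx⟩ hxB
    exact Subtype.ext <| eq_zero_of_isZeroForcingSet hA hB hx fun b hb => congrFun hxB ⟨b, hb⟩
  calc Module.finrank K (LinearMap.ker A.mulVecLin)
      ≤ Module.finrank K (B → K) := LinearMap.finrank_le_finrank_of_injective hinj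
    _ = B.ncard := by rw [Module.finrank_fintype_fun_eq_card, Set.ncard_eq_toFinset_card',
        Set.toFinset_card]

theorem card_sub_rank_eq_finrank_ker_mulVecLin :
    Fintype.card V - A.rank = Module.finrank K (LinearMap.ker A.mulVecLin) := by
  have := LinearMap.finrank_range_add_finrank_ker A.mulVecLin
  rw [Module.finrank_fintype_fun_eq_card] at this
  rw [Matrix.rank]
  omega

end ZeroForcing

theorem exists_isZeroForcingSet_ncard_eq_zfNumber {V : Type*} (G : SimpleGraph V) :
    ∃ B, IsZeroForcingSet G B ∧ B.ncard = zfNumber G := by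
  have huniv : IsZeroForcingSet G Set.univ :=
    Set.eq_univ_of_univ_subset fun _ _ => Set.mem_iUnion.mpr ⟨0, trivial⟩
  exact Nat.sInf_mem (s := Set.ncard '' {B | IsZeroForcingSet G B}) ⟨_, Set.univ, huniv, rfl⟩

/-- For every finite simple graph `G`, `M(G) ≤ Z(G)`. -/
theorem maxNullity_le_zfNumber {V : Type*} [Fintype V] (G : SimpleGraph V) :
    maxNullity G ≤ zfNumber G := by
  obtain ⟨B, hB, hBcard⟩ := exists_isZeroForcingSet_ncard_eq_zfNumber G
  refine csSup_le' ?_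
  rintro _ ⟨A, hA, rfl⟩
  rw [card_sub_rank_eq_finrank_ker_mulVecLin, ← hBcard]
  exact finrank_ker_mulVecLin_le_ncard hA.2 hB
end

section
/- Let G be a finite simple graph and let ℓ ≥ 0 be an integer. A set B ⊆ V(G) is an ℓ-leaky forcing set of G if and only if B intersects every ℓ-leaky fort of G. -/
/-- An `ℓ`-leaky fort: a nonempty set `S` such that at most `ℓ` vertices
outside of `S` have exactly one neighbor in `S`. -/
def IsLeakyFort {V : Type*} (G : SimpleGraph V) (ℓ : ℕ) (S : Set V) : Prop :=
  S.Nonempty ∧ {v | v ∉ S ∧ (G.neighborSet v ∩ S).ncard = 1}.ncard ≤ ℓ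

/-!
Both directions rest on one observation: for leaks `L`, the complement of a set `S` is closed
under a forcing step exactly when every vertex outside `S` with a unique neighbour in `S` is a
leak. So if `S` is an `ℓ`-leaky fort avoiding `B`, taking its unique-neighbour vertices as leaks
keeps `S` white forever; conversely, if some admissible leak set stalls the process, the final
set of white vertices (whose complement is closed under forcing because `V` is finite) is an
`ℓ`-leaky fort avoiding `B`.
-/

section LeakyForcing

variable {V : Type*} (G : SimpleGraph V) (L : Set V)

lemma subset_zfStep (B : Set V) : B ⊆ zfStep G L B := Set.subset_union_left

lemma zfStep_mono : Monotone (zfStep G L) := by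
  rintro A B hAB v (hv | ⟨u, hu, huL, hadj, hunique⟩)
  · exact Or.inl (hAB hv)
  · exact Or.inr ⟨u, hAB hu, huL, hadj, fun w hw hwB => hunique w hw (mt (@hAB w) hwB)⟩

lemma monotone_iterate_zfStep (B : Set V) : Monotone fun k => (zfStep G L)^[k] B :=
  monotone_nat_of_le_succ fun k => by
    rw [Function.iterate_succ_apply']
    exact subset_zfStep G L _

lemma subset_zfClosure (B : Set V) : B ⊆ zfClosure G L B :=
  Set.subset_iUnion (fun k => (zfStep G L)^[k] B) 0

lemma zfClosure_subset_of_zfStep_subset {A B : Set V} (hBA : B ⊆ A)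
    (hA : zfStep G L A ⊆ A) : zfClosure G L B ⊆ A := by
  refine Set.iUnion_subset fun k => ?_
  induction k with
  | zero => exact hBA
  | succ k ih =>
    rw [Function.iterate_succ_apply']
    exact (zfStep_mono G L ih).trans hA

lemma zfStep_zfClosure_subset [Finite V] (B : Set V) :
    zfStep G L (zfClosure G L B) ⊆ zfClosure G L B := by
  obtain ⟨n, hn⟩ :=
    WellFoundedGT.monotone_chain_condition ⟨_, monotone_iterate_zfStep G L B⟩
  have hstable : zfClosure G L B ⊆ (zfStep G L)^[n] B := Set.iUnion_subset fun k =>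
    (monotone_iterate_zfStep G L B (le_max_left k n)).trans_eq (hn _ (le_max_right k n)).symm
  calc zfStep G L (zfClosure G L B) ⊆ (zfStep G L)^[n + 1] B := by
        rw [Function.iterate_succ_apply']
        exact zfStep_mono G L hstable
    _ ⊆ zfClosure G L B := Set.subset_iUnion (fun k => (zfStep G L)^[k] B) (n + 1)

lemma zfStep_compl_subset_compl_iff (S : Set V) :
    zfStep G L Sᶜ ⊆ Sᶜ ↔ {v | v ∉ S ∧ (G.neighborSet v ∩ S).ncard = 1} ⊆ L := by
  have hforces (u v : V) : G.neighborSet u ∩ S = {v} ↔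
      G.Adj u v ∧ v ∈ S ∧ ∀ w, G.Adj u w → w ∉ Sᶜ → w = v := by
    simp only [Set.eq_singleton_iff_unique_mem, Set.mem_inter_iff, SimpleGraph.mem_neighborSet,
      Set.mem_compl_iff, not_not, and_imp]
    tauto
  constructor
  · rintro hclosed u ⟨huS, hu⟩
    obtain ⟨v, hv⟩ := Set.ncard_eq_one.1 hu
    obtain ⟨hadj, hvS, hunique⟩ := (hforces u v).1 hv
    by_contra huL
    exact hclosed (Or.inr ⟨u, huS, huL, hadj, hunique⟩) hvS
  · rintro hleaks v (hv | ⟨u, huS, huL, hadj, hunique⟩) hvS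
    · exact hv hvS
    · exact huL (hleaks ⟨huS, Set.ncard_eq_one.2 ⟨v, (hforces u v).2 ⟨hadj, hvS, hunique⟩⟩⟩)

end LeakyForcing

/-- A set `B` is an `ℓ`-leaky forcing set of a finite simple graph `G` if and
only if `B` intersects every `ℓ`-leaky fort of `G`. -/
theorem isLeakyForcingSet_iff_meets_forts {V : Type*} [Fintype V]
    (G : SimpleGraph V) (ℓ : ℕ) (B : Set V) :
    IsLeakyForcingSet G ℓ B ↔
      ∀ S : Set V, IsLeakyFort G ℓ S → (B ∩ S).Nonempty := by
  constructor
  · rintro hforcing S ⟨⟨s, hs⟩, hleaks⟩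
    by_contra hdisj
    have hBS : B ⊆ Sᶜ := fun x hxB hxS => hdisj ⟨x, hxB, hxS⟩
    have hstuck := zfClosure_subset_of_zfStep_subset G _ hBS
      ((zfStep_compl_subset_compl_iff G _ S).2 subset_rfl)
    rw [hforcing _ hleaks] at hstuck
    exact hstuck (Set.mem_univ s) hs
  · intro hmeets L hL
    by_contra hstall
    set C := zfClosure G L B
    have hfort : IsLeakyFort G ℓ Cᶜ := by
      refine ⟨Set.nonempty_compl.2 hstall, (Set.ncard_le_ncard ?_ L.toFinite).trans hL⟩
      rw [← zfStep_compl_subset_compl_iff, compl_compl]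
      exact zfStep_zfClosure_subset G L B
    obtain ⟨x, hxB, hxC⟩ := hmeets Cᶜ hfort
    exact hxC (subset_zfClosure G L B hxB)
end

section
/- For all positive integers m and n, the Hopi rectangle graphs HD(m,n) and HD(n,m) are isomorphic as graphs. -/
/-- The vertex set of the Hopi rectangle graph of order `(m,n)`: the set of
integer lattice points `(i,j)` with `m-1 ≤ i+j ≤ 2n+m-1` and `|i-j| ≤ m`
(realized as a `Finset` by filtering a sufficiently large box). -/
noncomputable def HDverts (m n : ℕ) : Finset (ℤ × ℤ) :=
  (Finset.Icc (-2 : ℤ) (2*n + 2*m) ×ˢ Finset.Icc (-2 : ℤ) (2*n + 2*m)).filter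
    (fun p => (m : ℤ) - 1 ≤ p.1 + p.2 ∧ p.1 + p.2 ≤ 2*n + m - 1 ∧ |p.1 - p.2| ≤ m)

/-- The Hopi rectangle graph `HD(m,n)`: vertices are the points of `HDverts m n`,
and `(i,j)` is adjacent to `(i',j')` iff `|i - i'| + |j - j'| = 1`. -/
def HD (m n : ℕ) : SimpleGraph {p : ℤ × ℤ // p ∈ HDverts m n} where
  Adj u v := |u.val.1 - v.val.1| + |u.val.2 - v.val.2| = 1
  symm := by
    constructor
    intro u v h
    rw [abs_sub_comm v.val.1 u.val.1, abs_sub_comm v.val.2 u.val.2]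
    exact h
  loopless := by constructor; intro u h; simp at h

/-! The reflection `(i, j) ↦ (i, m + n - 1 - j)` is an isometry of the taxicab lattice, and it
exchanges the two strip conditions: it sends `i + j` to `i - j + (m + n - 1)` and `i - j` to
`i + j - (m + n - 1)`, so it maps the vertex set of `HD(m,n)` onto that of `HD(n,m)`. -/

lemma mem_HDverts_swap_iff (m n : ℕ) (p : ℤ × ℤ) :
    p ∈ HDverts m n ↔ (p.1, (m + n - 1 : ℤ) - p.2) ∈ HDverts n m := by
  simp only [HDverts, Finset.mem_filter, Finset.mem_product, Finset.mem_Icc, abs_le]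
  omega

def HD.swapIso (m n : ℕ) : HD m n ≃g HD n m where
  toEquiv := (Equiv.prodCongr (Equiv.refl ℤ) (Equiv.subLeft (m + n - 1 : ℤ))).subtypeEquiv
    (mem_HDverts_swap_iff m n)
  map_rel_iff' {u v} := by
    change |u.1.1 - v.1.1| + |((m + n - 1 : ℤ) - u.1.2) - ((m + n - 1 : ℤ) - v.1.2)| = 1 ↔ _
    rw [sub_sub_sub_cancel_left, abs_sub_comm v.1.2]
    rfl

theorem HD_iso_swap_general (m n : ℕ) :
    Nonempty (HD m n ≃g HD n m) :=
  ⟨HD.swapIso m n⟩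

/-- `HD(m,n)` and `HD(n,m)` are isomorphic as graphs. -/
theorem HD_iso_swap (m n : ℕ) (hm : 0 < m) (hn : 0 < n) :
    Nonempty (HD m n ≃g HD n m) :=
  HD_iso_swap_general m n
end

section
/- For all positive integers m and n, there exist m·n subgraphs H_1, …, H_{mn} of the Hopi rectangle graph HD(m,n), each isomorphic to the 4-cycle C_4, such that the edge set of HD(m,n) is the union of the edge sets of H_1, …, H_{mn}. -/
open SimpleGraph

def unitSquare (c : ℤ × ℤ) : Fin 4 → ℤ × ℤ :=
  ![c, (c.1 + 1, c.2), (c.1 + 1, c.2 + 1), (c.1, c.2 + 1)]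

lemma unitSquare_injective (c : ℤ × ℤ) : Function.Injective (unitSquare c) := by
  intro i j h
  fin_cases i <;> fin_cases j <;> simp_all [unitSquare, Prod.ext_iff]

lemma unitSquare_adj_iff (c : ℤ × ℤ) (i j : Fin 4) :
    |(unitSquare c i).1 - (unitSquare c j).1| + |(unitSquare c i).2 - (unitSquare c j).2| = 1 ↔
      (cycleGraph 4).Adj i j := by
  rw [Int.abs_eq_natAbs, Int.abs_eq_natAbs]
  fin_cases i <;> fin_cases j <;>
    simp only [unitSquare, Fin.zero_eta, Fin.mk_one, Fin.reduceFinMk, Fin.isValue,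
      Matrix.cons_val_zero, Matrix.cons_val_one, Matrix.cons_val] <;>
    first
    | exact iff_of_true (by omega) (by decide)
    | exact iff_of_false (by omega) (by decide)

lemma mem_range_unitSquare {c p : ℤ × ℤ} :
    p ∈ Set.range (unitSquare c) ↔ c.1 ≤ p.1 ∧ p.1 ≤ c.1 + 1 ∧ c.2 ≤ p.2 ∧ p.2 ≤ c.2 + 1 := by
  constructor
  · rintro ⟨i, rfl⟩
    fin_cases i <;> simp [unitSquare]
  · obtain ⟨x, y⟩ := p
    intro h
    obtain ⟨rfl | rfl, rfl | rfl⟩ : (x = c.1 ∨ x = c.1 + 1) ∧ (y = c.2 ∨ y = c.2 + 1) := by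
      simp only at h; omega
    exacts [⟨0, rfl⟩, ⟨3, rfl⟩, ⟨1, rfl⟩, ⟨2, rfl⟩]

lemma mem_HDverts {m n : ℕ} {p : ℤ × ℤ} :
    p ∈ HDverts m n ↔ (m : ℤ) - 1 ≤ p.1 + p.2 ∧ p.1 + p.2 ≤ 2 * n + m - 1 ∧ |p.1 - p.2| ≤ m := by
  simp only [HDverts, Finset.mem_filter, Finset.mem_product, Finset.mem_Icc,
    and_iff_right_iff_imp]
  rw [abs_le]
  omega

def squareCorner (m t r : ℕ) : ℤ × ℤ := (t + r, m - 1 + t - r)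

lemma unitSquare_squareCorner_mem_HDverts {m n t r : ℕ} (ht : t < n) (hr : r < m) (i : Fin 4) :
    unitSquare (squareCorner m t r) i ∈ HDverts m n := by
  rw [mem_HDverts, abs_le]
  fin_cases i <;>
    simp only [unitSquare, squareCorner, Fin.zero_eta, Fin.mk_one, Fin.reduceFinMk, Fin.isValue,
      Matrix.cons_val_zero, Matrix.cons_val_one, Matrix.cons_val] <;>
    omega

lemma exists_squareCorner_of_adj {m n : ℕ} {p q : ℤ × ℤ} (hp : p ∈ HDverts m n)
    (hq : q ∈ HDverts m n) (hpq : |p.1 - q.1| + |p.2 - q.2| = 1) :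
    ∃ t < n, ∃ r < m, p ∈ Set.range (unitSquare (squareCorner m t r)) ∧
      q ∈ Set.range (unitSquare (squareCorner m t r)) := by
  rw [mem_HDverts, abs_le] at hp hq
  rw [Int.abs_eq_natAbs, Int.abs_eq_natAbs] at hpq
  -- In the coordinates σ = x + y - (m - 1), δ = x - y + (m - 1) the square (t, r) is the diamond
  -- around (2t + 1, 2r), and an edge has σ-values {2t, 2t + 1} or {2t + 1, 2t + 2} and
  -- δ-values {2r, 2r ± 1}.
  refine ⟨((p.1 + p.2 + q.1 + q.2 - 2 * (m - 1)) / 4).toNat, ?_,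
    ((p.1 - p.2 + q.1 - q.2 + 2 * (m - 1) + 1) / 4).toNat, ?_, ?_⟩
  · omega
  · omega
  · simp only [mem_range_unitSquare, squareCorner]
    omega

lemma SimpleGraph.Embedding.toCopy_toSubgraph_adj {α β : Type*} {A : SimpleGraph α}
    {B : SimpleGraph β} (f : A ↪g B) {u v : β} (hu : u ∈ Set.range f) (hv : v ∈ Set.range f)
    (huv : B.Adj u v) : f.toCopy.toSubgraph.Adj u v := by
  obtain ⟨i, rfl⟩ := hu
  obtain ⟨j, rfl⟩ := hv
  exact ⟨i, j, f.map_adj_iff.1 huv, rfl, rfl⟩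

def squareEmbedding {m n : ℕ} (k : Fin m × Fin n) : cycleGraph 4 ↪g HD m n where
  toFun i := ⟨unitSquare (squareCorner m k.2 k.1) i,
    unitSquare_squareCorner_mem_HDverts k.2.isLt k.1.isLt i⟩
  inj' _ _ h := unitSquare_injective _ (congrArg Subtype.val h)
  map_rel_iff' := unitSquare_adj_iff _ _ _

lemma exists_adj_squareEmbedding {m n : ℕ} {u v : {p : ℤ × ℤ // p ∈ HDverts m n}}
    (huv : (HD m n).Adj u v) : ∃ k, (squareEmbedding k).toCopy.toSubgraph.Adj u v := by
  obtain ⟨t, ht, r, hr, hu, hv⟩ := exists_squareCorner_of_adj u.2 v.2 huv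
  exact ⟨(⟨r, hr⟩, ⟨t, ht⟩), Embedding.toCopy_toSubgraph_adj _
    (hu.imp fun _ => Subtype.ext) (hv.imp fun _ => Subtype.ext) huv⟩

theorem HD_edge_cover_by_C4_general (m n : ℕ) :
    ∃ H : Fin (m * n) → (HD m n).Subgraph,
      (∀ i, Nonempty ((H i).coe ≃g SimpleGraph.cycleGraph 4)) ∧
      (⋃ i, (H i).edgeSet) = (HD m n).edgeSet := by
  refine ⟨fun k => (squareEmbedding (finProdFinEquiv.symm k)).toCopy.toSubgraph,
    fun k => ⟨(Copy.isoToSubgraph _).symm⟩, ?_⟩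
  refine (Set.iUnion_subset fun k => Subgraph.edgeSet_subset _).antisymm ?_
  rintro ⟨u, v⟩ huv
  obtain ⟨k, hk⟩ := exists_adj_squareEmbedding huv
  exact Set.mem_iUnion.2 ⟨finProdFinEquiv k, by rwa [Equiv.symm_apply_apply]⟩

/-- There are `m · n` subgraphs of `HD(m,n)`, each isomorphic to the cycle
`C₄`, whose edge sets cover the edge set of `HD(m,n)`. -/
theorem HD_edge_cover_by_C4 (m n : ℕ) (hm : 0 < m) (hn : 0 < n) :
    ∃ H : Fin (m * n) → (HD m n).Subgraph,
      (∀ i, Nonempty ((H i).coe ≃g SimpleGraph.cycleGraph 4)) ∧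
      (⋃ i, (H i).edgeSet) = (HD m n).edgeSet :=
  HD_edge_cover_by_C4_general m n
end
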